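/- arXiv:2010.05486 — 2 statements merged into one kernel-verified Lean document; each statement's English description precedes it below -/
import Mathlib

section
/- Let (v_k)_{k∈ℕ} be a real sequence with v_k = 0 for k < 0, let a_k = Σ_{i=0}^{k} v_i, and suppose w_k = a_k - a_{k-θ_k} for a delay sequence with 0 ≤ θ_k ≤ τ for all k, where τ ≥ 1 is a fixed natural number. Then for every T, Σ_{k=0}^{T} w_k² ≤ τ² Σ_{k=0}^{T} v_k², i.e., the map (v_k) ↦ (w_k) has finite ℓ₂ gain at most τ. -/
/-!
Each `w_k` is the sum of `v` over the window of the last `θ_k ≤ τ` indices up to `k`, so by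
Cauchy–Schwarz `w_k² ≤ τ Σ v_i²` over the window of the last `τ` indices. Summing over `k ≤ T`,
every `v_i²` lies in at most `τ` of these windows, which gives the second factor `τ`.
-/

open Finset

theorem partialSum_sub_delayed_eq_sum_Ico {R : Type*} [AddCommGroup R] (v : ℕ → R) (a : ℤ → R)
    (ha : ∀ k : ℤ, a k = if 0 ≤ k then ∑ i ∈ range (k.toNat + 1), v i else 0) (k θ : ℕ) :
    a k - a ((k : ℤ) - θ) = ∑ i ∈ Ico (k + 1 - θ) (k + 1), v i := by
  rw [ha, ha, if_pos (Int.natCast_nonneg k), Int.toNat_natCast]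
  by_cases hθ : θ ≤ k
  · rw [if_pos (by omega), sum_Ico_eq_sub _ (by omega)]
    congr 3
    omega
  · rw [if_neg (by omega), sub_zero, Nat.sub_eq_zero_of_le (by omega), range_eq_Ico]

theorem sq_sum_Ico_sub_le {R : Type*} [Semiring R] [LinearOrder R] [IsStrictOrderedRing R]
    [ExistsAddOfLE R] (v : ℕ → R) {θ τ : ℕ} (hθ : θ ≤ τ) (n : ℕ) :
    (∑ i ∈ Ico (n - θ) n, v i) ^ 2 ≤ τ * ∑ i ∈ Ico (n - τ) n, v i ^ 2 := by
  calc (∑ i ∈ Ico (n - θ) n, v i) ^ 2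
      ≤ #(Ico (n - θ) n) * ∑ i ∈ Ico (n - θ) n, v i ^ 2 := sq_sum_le_card_mul_sum_sq
    _ ≤ τ * ∑ i ∈ Ico (n - τ) n, v i ^ 2 := by
      have hcard : #(Ico (n - θ) n) ≤ τ := by
        rw [Nat.card_Ico]
        omega
      have hsq : ∀ i, 0 ≤ v i ^ 2 := fun i ↦ sq_nonneg (v i)
      exact mul_le_mul (by exact_mod_cast hcard)
        (sum_le_sum_of_subset_of_nonneg (Ico_subset_Ico_left (by omega)) fun i _ _ ↦ hsq i)
        (sum_nonneg fun i _ ↦ hsq i) (Nat.cast_nonneg τ)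

theorem sum_range_sum_Ico_sub_le {M : Type*} [AddCommMonoid M] [PartialOrder M]
    [IsOrderedAddMonoid M] {f : ℕ → M} (hf : ∀ i, 0 ≤ f i) (τ n : ℕ) :
    ∑ k ∈ range n, ∑ i ∈ Ico (k + 1 - τ) (k + 1), f i ≤ τ • ∑ i ∈ range n, f i := by
  rw [sum_comm' (s' := fun i ↦ range n ∩ Ico i (i + τ)) (t' := range n)
    (fun k i ↦ by simp only [mem_range, mem_Ico, mem_inter]; omega), smul_sum]
  gcongr with i
  rw [sum_const]
  refine nsmul_le_nsmul_left (hf i) ((card_le_card inter_subset_right).trans ?_)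
  rw [Nat.card_Ico]
  omega

theorem stmt_4_general (τ : ℕ) (v : ℕ → ℝ) (θ : ℕ → ℕ) (hθ : ∀ k, θ k ≤ τ)
    (a : ℤ → ℝ)
    (ha : ∀ k : ℤ, a k = if 0 ≤ k then ∑ i ∈ Finset.range (k.toNat + 1), v i else 0)
    (w : ℕ → ℝ) (hw : ∀ k : ℕ, w k = a k - a ((k : ℤ) - (θ k : ℤ))) :
    ∀ T : ℕ, ∑ k ∈ Finset.range (T + 1), (w k) ^ 2 ≤
      (τ : ℝ) ^ 2 * ∑ k ∈ Finset.range (T + 1), (v k) ^ 2 := by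
  intro T
  calc ∑ k ∈ range (T + 1), w k ^ 2
      = ∑ k ∈ range (T + 1), (∑ i ∈ Ico (k + 1 - θ k) (k + 1), v i) ^ 2 := by
        simp only [hw, partialSum_sub_delayed_eq_sum_Ico v a ha]
    _ ≤ ∑ k ∈ range (T + 1), τ * ∑ i ∈ Ico (k + 1 - τ) (k + 1), v i ^ 2 :=
        sum_le_sum fun k _ ↦ sq_sum_Ico_sub_le v (hθ k) (k + 1)
    _ ≤ τ * (τ • ∑ i ∈ range (T + 1), v i ^ 2) := by
        rw [← mul_sum]
        gcongr
        exact sum_range_sum_Ico_sub_le (fun i ↦ sq_nonneg (v i)) τ (T + 1)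
    _ = τ ^ 2 * ∑ i ∈ range (T + 1), v i ^ 2 := by
        rw [nsmul_eq_mul]
        ring

/-- The delay-uncertainty map of protocol P₁ (applied after a discrete integrator)
has finite ℓ₂ gain at most `τ`: if `a_k = Σ_{i=0}^k v_i` (with `a_k = 0` for `k < 0`)
and `w_k = a_k - a_{k-θ_k}` with delays `0 ≤ θ_k ≤ τ`, then
`Σ_{k=0}^T w_k² ≤ τ² Σ_{k=0}^T v_k²` for every `T`. -/
theorem stmt_4 (τ : ℕ) (hτ : 1 ≤ τ) (v : ℕ → ℝ) (θ : ℕ → ℕ) (hθ : ∀ k, θ k ≤ τ)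
    (a : ℤ → ℝ)
    (ha : ∀ k : ℤ, a k = if 0 ≤ k then ∑ i ∈ Finset.range (k.toNat + 1), v i else 0)
    (w : ℕ → ℝ) (hw : ∀ k : ℕ, w k = a k - a ((k : ℤ) - (θ k : ℤ))) :
    ∀ T : ℕ, ∑ k ∈ Finset.range (T + 1), (w k) ^ 2 ≤
      (τ : ℝ) ^ 2 * ∑ k ∈ Finset.range (T + 1), (v k) ^ 2 :=
  stmt_4_general τ v θ hθ a ha w hw
end

section
/- Let α_A, α_B, α₁₁, α₁₂, α₂₁, α₂₂ ≥ 0 be real numbers satisfying α_B·α₂₁ < 1 and α_A·α₁₂ + (α_A·α_B·α₁₁·α₂₂)/(1 - α_B·α₂₁) < 1. Suppose nonnegative reals E₁, E₂ (representing truncated norms ‖e₁‖_T, ‖e₂‖_T) satisfy E₁ ≤ U₁ + α_A(U_A + α₁₂E₁ + α₂₂E₂ + β) and E₂ ≤ U₂ + α_B(U_B + α₁₁E₁ + α₂₁E₂ + β') for some nonnegative constants U₁, U₂, U_A, U_B, β, β'. Then E₁ is bounded above by a constant depending only on U₁, U₂, U_A, U_B, β, β' and the gains (in particular E₁ ≤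 δ₂ / (1 - α_A·α₁₂ - α_Aα_Bα₁₁α₂₂/(1-α_Bα₂₁)) for an explicit δ₂). -/
/-!
Both inequalities have the scalar shape `x ≤ a + b x` with `b < 1`, which solves to
`x ≤ a / (1 - b)`. Solving the second one for `E₂` bounds it by an affine function of `E₁`;
substituting that bound into the first (legitimate since `α_A α₂₂ ≥ 0`) leaves an inequality of the
same shape for `E₁` alone, whose gain is the small-gain quantity assumed to be `< 1`.
-/

theorem le_div_one_sub_of_le_add_mul {K : Type*} [Field K] [LinearOrder K] [IsStrictOrderedRing K]
    {x a b : K} (hb : b < 1) (h : x ≤ a + b * x) : x ≤ a / (1 - b) := by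
  rw [le_div_iff₀ (sub_pos.2 hb)]
  linarith

theorem stmt_7_general (αA αB α11 α12 α21 α22 : ℝ)
    (hαA : 0 ≤ αA) (h22 : 0 ≤ α22)
    (hB : αB * α21 < 1)
    (hsg : αA * α12 + αA * αB * α11 * α22 / (1 - αB * α21) < 1)
    (E₁ E₂ U₁ U₂ UA UB β β' : ℝ)
    (hE₁ : E₁ ≤ U₁ + αA * (UA + α12 * E₁ + α22 * E₂ + β))
    (hE₂ : E₂ ≤ U₂ + αB * (UB + α11 * E₁ + α21 * E₂ + β')) :
    E₁ ≤ (U₁ + αA * (UA + β + α22 * (U₂ + αB * (UB + β')) / (1 - αB * α21))) /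
      (1 - αA * α12 - αA * αB * α11 * α22 / (1 - αB * α21)) := by
  have hE₂_le : E₂ ≤ (U₂ + αB * (UB + β') + αB * α11 * E₁) / (1 - αB * α21) :=
    le_div_one_sub_of_le_add_mul hB (by linarith)
  have hsubst := mul_le_mul_of_nonneg_left hE₂_le (mul_nonneg hαA h22)
  rw [← sub_add_eq_sub_sub]
  refine le_div_one_sub_of_le_add_mul hsg ?_
  have hsplit : αA * α22 * ((U₂ + αB * (UB + β') + αB * α11 * E₁) / (1 - αB * α21)) =
      αA * (α22 * (U₂ + αB * (UB + β')) / (1 - αB * α21)) +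
        αA * αB * α11 * α22 / (1 - αB * α21) * E₁ := by
    ring
  linarith

/-- Core algebraic step of the three-block small-gain criterion: under the
small-gain conditions, the truncated norm `E₁` of the first internal error
signal is bounded by the explicit constant
`δ₂ / (1 - α_A α₁₂ - α_A α_B α₁₁ α₂₂/(1-α_B α₂₁))`, where
`δ₁ = U₂ + α_B (U_B + β')` and `δ₂ = U₁ + α_A (U_A + β + α₂₂ δ₁/(1-α_B α₂₁))`. -/
theorem stmt_7 (αA αB α11 α12 α21 α22 : ℝ)
    (hαA : 0 ≤ αA) (hαB : 0 ≤ αB) (h11 : 0 ≤ α11) (h12 : 0 ≤ α12)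
    (h21 : 0 ≤ α21) (h22 : 0 ≤ α22)
    (hB : αB * α21 < 1)
    (hsg : αA * α12 + αA * αB * α11 * α22 / (1 - αB * α21) < 1)
    (E₁ E₂ U₁ U₂ UA UB β β' : ℝ)
    (hE₁0 : 0 ≤ E₁) (hE₂0 : 0 ≤ E₂) (hU₁ : 0 ≤ U₁) (hU₂ : 0 ≤ U₂)
    (hUA : 0 ≤ UA) (hUB : 0 ≤ UB) (hβ : 0 ≤ β) (hβ' : 0 ≤ β')
    (hE₁ : E₁ ≤ U₁ + αA * (UA + α12 * E₁ + α22 * E₂ + β))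
    (hE₂ : E₂ ≤ U₂ + αB * (UB + α11 * E₁ + α21 * E₂ + β')) :
    E₁ ≤ (U₁ + αA * (UA + β + α22 * (U₂ + αB * (UB + β')) / (1 - αB * α21))) /
      (1 - αA * α12 - αA * αB * α11 * α22 / (1 - αB * α21)) :=
  stmt_7_general αA αB α11 α12 α21 α22 hαA h22 hB hsg E₁ E₂ U₁ U₂ UA UB β β' hE₁ hE₂
end
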